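/- Let ℓ ∈ ℕ and suppose some colored ℓ-ball of (T, φ) is special. Then: (a) for every vertex x there exists M ∈ ℕ such that some vertex w with d(x, w) ≤ M has [B_ℓ(w)] special, and M can be chosen depending only on the equivalence class [B_ℓ(x)] (if [B_ℓ(x)] = [B_ℓ(x')], the same M works for x'); (b) if moreover the alphabet A is finite, then there exists N ∈ ℕ such that for every vertex x there is a vertex w with d(x, w) ≤ N and [B_ℓ(w)] special. -/

import Mathlib

/-!
If `w'` is not special and has the same colored `l`-ball as `w`, then the two vertices also have
the same colored `(l + 1)`-ball. An isomorphism of `(l + 1)`-balls maps the `l`-ball around a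
neighbor of the center onto the `l`-ball around its image, because geodesics from that neighbor
stay inside the `(l + 1)`-ball. Hence a step from `w` towards a special vertex `x₀` can be copied
at `w'`, and after at most `d(w, x₀)` steps one meets a special vertex: `M = d(x, x₀)` works.

In a `k`-regular graph an `l`-ball has at most `(k + 1) ^ l` vertices, so with a finite alphabet
there are only finitely many classes of colored `l`-balls, and `N` is the largest `M` over a set
of representatives.
-/
open SimpleGraph

/-- Equivalence of colored `n`-balls around `x` and `y`: a graph isomorphism between the
induced subgraphs on the balls, sending center to center and preserving the coloring. -/
def BallEquiv {V A : Type*} (T : SimpleGraph V) (φ : V → A) (n : ℕ) (x y : V) : Prop :=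
  ∃ f : {v : V // T.dist x v ≤ n} ≃ {v : V // T.dist y v ≤ n},
    ((f ⟨x, by simp [SimpleGraph.dist_self]⟩ : {v : V // T.dist y v ≤ n}) : V) = y ∧
    (∀ u w : {v : V // T.dist x v ≤ n}, T.Adj (u : V) (w : V) ↔ T.Adj (f u : V) (f w : V)) ∧
    ∀ v : {v : V // T.dist x v ≤ n}, φ (f v : V) = φ (v : V)

/-- Two vertices are in the same class if a color-preserving automorphism of `T`
sends one to the other. -/
def SameClass {V A : Type*} (T : SimpleGraph V) (φ : V → A) (x y : V) : Prop :=
  ∃ g : V ≃ V, (∀ u w : V, T.Adj (g u) (g w) ↔ T.Adj u w) ∧ g x = y ∧ ∀ v, φ (g v) = φ v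

/-- Subword complexity: the number of equivalence classes of colored `n`-balls. -/
noncomputable def ballComplexity {V A : Type*} (T : SimpleGraph V) (φ : V → A) (n : ℕ) : ℕ :=
  Nat.card (Quot (BallEquiv T φ n))

/-- A coloring is periodic if it is invariant under a subgroup of the automorphism group
of `T` having finitely many orbits on vertices. -/
def IsPeriodicColoring {V A : Type*} (T : SimpleGraph V) (φ : V → A) : Prop :=
  ∃ Γ : Subgroup (Equiv.Perm V),
    (∀ γ ∈ Γ, ∀ u w : V, T.Adj (γ u) (γ w) ↔ T.Adj u w) ∧
    (∀ γ ∈ Γ, ∀ v, φ (γ v) = φ v) ∧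
    Finite (Quot (fun x y : V => ∃ γ ∈ Γ, γ x = y))

/-- The colored `n`-ball around `x` is special. -/
def IsSpecial {V A : Type*} (T : SimpleGraph V) (φ : V → A) (n : ℕ) (x : V) : Prop :=
  ∃ y z : V, BallEquiv T φ n x y ∧ BallEquiv T φ n x z ∧ ¬ BallEquiv T φ (n + 1) y z

/-- The type set of a vertex. -/
def TypeSet {V A : Type*} (T : SimpleGraph V) (φ : V → A) (x : V) : Set ℕ :=
  {n : ℕ | IsSpecial T φ n x}

/-- The maximal type of a vertex of bounded type (`-1` if the type set is empty). -/
noncomputable def maxType {V A : Type*} (T : SimpleGraph V) (φ : V → A) (x : V) : ℤ :=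
  sSup (insert (-1) ((fun n : ℕ => (n : ℤ)) '' TypeSet T φ x))

/-- The coloring is Sturmian if its subword complexity is `n + 2`. -/
def IsSturmian {V A : Type*} (T : SimpleGraph V) (φ : V → A) : Prop :=
  ∀ n : ℕ, ballComplexity T φ n = n + 2

/-- Eventually periodic coloring. -/
def IsEventuallyPeriodic {V A : Type*} (T : SimpleGraph V) (φ : V → A) : Prop :=
  ∃ K : Set V, K.Nonempty ∧ K.Finite ∧ (T.induce K).Connected ∧
    ∀ v : (Kᶜ : Set V), ∃ ψ : V → A, IsPeriodicColoring T ψ ∧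
      ∀ w : (Kᶜ : Set V), (T.induce (Kᶜ : Set V)).Reachable v w → ψ (w : V) = φ (w : V)

/-- The vertex set of the `n`-branch from `x` towards its neighbor `x'`. -/
def branchSet {V : Type*} (T : SimpleGraph V) (n : ℕ) (x x' : V) : Set V :=
  insert x {y : V | T.dist x y ≤ n ∧ T.dist y x' < T.dist y x}

/-- Equivalence of colored `n`-branches. -/
def BranchEquiv {V A : Type*} (T : SimpleGraph V) (φ : V → A) (n : ℕ)
    (x x' y y' : V) : Prop :=
  ∃ f : (branchSet T n x x') ≃ (branchSet T n y y'),
    ((f ⟨x, Set.mem_insert x _⟩ : (branchSet T n y y')) : V) = y ∧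
    (∀ u w : (branchSet T n x x'), T.Adj (u : V) (w : V) ↔ T.Adj (f u : V) (f w : V)) ∧
    ∀ v : (branchSet T n x x'), φ (f v : V) = φ (v : V)

/-- A coloring of `K` appears exactly once if the only connected subgraph of `T`
color-isomorphic to it is `K` itself. -/
def AppearsOnce {V A : Type*} (T : SimpleGraph V) (φ : V → A) (K : Set V) : Prop :=
  ∀ K' : Set V, (T.induce K').Connected →
    (∃ f : K ≃ K', (∀ u w : K, T.Adj (u : V) (w : V) ↔ T.Adj (f u : V) (f w : V)) ∧
      ∀ v : K, φ (f v : V) = φ (v : V)) → K' = K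

lemma Quot.finite_of_eq_imp_rel {α C : Type*} [Finite C] {r : α → α → Prop} (c : α → C)
    (hc : ∀ a b, c a = c b → r a b) : Finite (Quot r) := by
  refine Finite.of_surjective (fun b : Set.range c => Quot.mk r b.2.choose) ?_
  rintro ⟨a⟩
  exact ⟨⟨c a, a, rfl⟩, Quot.sound (hc _ _ (⟨c a, a, rfl⟩ : Set.range c).2.choose_spec)⟩

namespace SimpleGraph

variable {V : Type*} {G : SimpleGraph V}

lemma Connected.exists_adj_dist_eq_of_dist_eq_succ (hG : G.Connected) {u v : V} {m : ℕ}
    (h : G.dist u v = m + 1) : ∃ w, G.Adj u w ∧ G.dist w v = m := by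
  obtain ⟨W, hW⟩ := hG.exists_walk_length_eq_dist u v
  cases W with
  | nil => simp_all
  | @cons _ w _ huw W =>
    refine ⟨w, huw, le_antisymm ?_ ?_⟩
    · have := G.dist_le W
      simp only [Walk.length_cons] at hW
      omega
    · have := hG.dist_triangle (u := u) (v := w) (w := v)
      rw [dist_eq_one_iff_adj.2 huw] at this
      omega

lemma Connected.dist_le_succ_of_adj (hG : G.Connected) {u w v : V} {n : ℕ} (huw : G.Adj u w)
    (h : G.dist w v ≤ n) : G.dist u v ≤ n + 1 :=
  calc G.dist u v ≤ G.dist u w + G.dist w v := hG.dist_triangle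
    _ ≤ n + 1 := by rw [dist_eq_one_iff_adj.2 huw]; omega

lemma Connected.finite_and_ncard_setOf_dist_le (hG : G.Connected) {k : ℕ}
    (hfin : ∀ v, (G.neighborSet v).Finite) (hdeg : ∀ v, (G.neighborSet v).ncard ≤ k)
    (x : V) (n : ℕ) :
    {v | G.dist x v ≤ n}.Finite ∧ {v | G.dist x v ≤ n}.ncard ≤ (k + 1) ^ n := by
  induction n with
  | zero =>
    have hball : {v | G.dist x v ≤ 0} = {x} := by
      ext v
      simp [hG.dist_eq_zero_iff, eq_comm]
    rw [hball]
    simp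
  | succ n ih =>
    obtain ⟨hball, hcard⟩ := ih
    have hsub : {v | G.dist x v ≤ n + 1} ⊆
        ⋃ p ∈ hball.toFinset, insert p (G.neighborSet p) := by
      intro v hv
      simp only [Set.mem_ofPred_eq, Set.Finite.mem_toFinset, Set.mem_iUnion] at hv ⊢
      by_cases hvn : G.dist x v ≤ n
      · exact ⟨v, hvn, Set.mem_insert v _⟩
      · obtain ⟨p, hvp, hpx⟩ := hG.exists_adj_dist_eq_of_dist_eq_succ
          (show G.dist v x = n + 1 by rw [dist_comm]; omega)
        exact ⟨p, by rw [dist_comm, hpx], Set.mem_insert_of_mem _ hvp.symm⟩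
    have hunion : (⋃ p ∈ hball.toFinset, insert p (G.neighborSet p)).Finite :=
      hball.toFinset.finite_toSet.biUnion fun p _ => (hfin p).insert p
    refine ⟨hunion.subset hsub, ?_⟩
    calc {v | G.dist x v ≤ n + 1}.ncard
        ≤ (⋃ p ∈ hball.toFinset, insert p (G.neighborSet p)).ncard :=
          Set.ncard_le_ncard hsub hunion
      _ ≤ ∑ p ∈ hball.toFinset, (insert p (G.neighborSet p)).ncard :=
          hball.toFinset.set_ncard_biUnion_le _
      _ ≤ hball.toFinset.card * (k + 1) :=
          Finset.sum_le_card_nsmul _ _ _ fun p _ =>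
            (Set.ncard_insert_le p _).trans (Nat.add_le_add_right (hdeg p) 1)
      _ ≤ (k + 1) ^ (n + 1) := by
          rw [← Set.ncard_eq_toFinset_card _ hball, pow_succ]
          exact Nat.mul_le_mul_right _ hcard

end SimpleGraph

section BallEquiv

variable {V A : Type*} {G : SimpleGraph V} {φ : V → A} {n : ℕ}

lemma adj_symm_apply_iff {x y : V}
    {F : {v // G.dist x v ≤ n} ≃ {v // G.dist y v ≤ n}}
    (hF : ∀ u w : {v // G.dist x v ≤ n}, G.Adj u w ↔ G.Adj (F u : V) (F w)) (u w) :
    G.Adj (F.symm u : V) (F.symm w) ↔ G.Adj u w := by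
  simpa using hF (F.symm u) (F.symm w)

lemma exists_walk_ballIso {x y : V} {F : {v // G.dist x v ≤ n} ≃ {v // G.dist y v ≤ n}}
    (hF : ∀ u w : {v // G.dist x v ≤ n}, G.Adj u w ↔ G.Adj (F u : V) (F w)) {u v : V}
    (W : G.Walk u v) (hW : ∀ p ∈ W.support, G.dist x p ≤ n) (hu : G.dist x u ≤ n)
    (hv : G.dist x v ≤ n) :
    ∃ W' : G.Walk (F ⟨u, hu⟩) (F ⟨v, hv⟩), W'.length = W.length := by
  induction W with
  | nil => exact ⟨Walk.nil, rfl⟩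
  | @cons u w v huw W ih =>
    have hw : G.dist x w ≤ n := hW w (by simp)
    obtain ⟨W', hW'⟩ := ih (fun p hp => hW p (by simp [hp])) hw hv
    exact ⟨Walk.cons ((hF ⟨u, hu⟩ ⟨w, hw⟩).1 huw) W', by simp [hW']⟩

/-- A geodesic from `u` to `v` stays in the ball, so `F` maps it to a walk of the same length. -/
lemma dist_ballIso_le (hG : G.Connected) {x y : V}
    {F : {v // G.dist x v ≤ n} ≃ {v // G.dist y v ≤ n}}
    (hF : ∀ u w : {v // G.dist x v ≤ n}, G.Adj u w ↔ G.Adj (F u : V) (F w))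
    (u v : {v // G.dist x v ≤ n}) (huv : G.dist x u + G.dist (u : V) v ≤ n) :
    G.dist (F u : V) (F v) ≤ G.dist (u : V) v := by
  classical
  obtain ⟨W, hW⟩ := hG.exists_walk_length_eq_dist (u : V) v
  have hsupp : ∀ p ∈ W.support, G.dist x p ≤ n := fun p hp =>
    calc G.dist x p ≤ G.dist x u + G.dist (u : V) p := hG.dist_triangle
      _ ≤ G.dist x u + G.dist (u : V) v := by
          grw [G.dist_le (W.takeUntil p hp), W.length_takeUntil_le_length hp, hW]
      _ ≤ n := huv
  obtain ⟨W', hW'⟩ := exists_walk_ballIso hF W hsupp u.2 v.2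
  exact hW ▸ hW' ▸ G.dist_le W'

lemma BallEquiv.refl (x : V) : BallEquiv G φ n x x :=
  ⟨Equiv.refl _, rfl, fun _ _ => Iff.rfl, fun _ => rfl⟩

lemma BallEquiv.symm {x y : V} (h : BallEquiv G φ n x y) : BallEquiv G φ n y x := by
  obtain ⟨F, hcen, hadj, hcol⟩ := h
  refine ⟨F.symm, ?_, fun u w => (adj_symm_apply_iff hadj u w).symm, fun v => ?_⟩
  · have hFx : F ⟨x, by simp⟩ = ⟨y, by simp⟩ := Subtype.ext hcen
    rw [← hFx, F.symm_apply_apply]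
  · simpa using (hcol (F.symm v)).symm

lemma BallEquiv.trans {x y z : V} (h₁ : BallEquiv G φ n x y) (h₂ : BallEquiv G φ n y z) :
    BallEquiv G φ n x z := by
  obtain ⟨F, hcen, hadj, hcol⟩ := h₁
  obtain ⟨F', hcen', hadj', hcol'⟩ := h₂
  refine ⟨F.trans F', ?_, fun u w => (hadj u w).trans (hadj' _ _),
    fun v => (hcol' _).trans (hcol v)⟩
  rw [Equiv.trans_apply, show F _ = ⟨y, by simp⟩ from Subtype.ext hcen, hcen']

lemma ballEquiv_equivalence : Equivalence (BallEquiv G φ n) :=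
  ⟨BallEquiv.refl, BallEquiv.symm, BallEquiv.trans⟩

lemma BallEquiv.exists_adj_of_succ (hG : G.Connected) {x y u : V}
    (h : BallEquiv G φ (n + 1) x y) (hxu : G.Adj x u) :
    ∃ u', G.Adj y u' ∧ BallEquiv G φ n u u' := by
  obtain ⟨F, hcen, hadj, hcol⟩ := h
  have hx : G.dist x x ≤ n + 1 := by simp
  have hu : G.dist x u ≤ n + 1 := hG.dist_le_succ_of_adj hxu (by simp)
  set u' : V := (F ⟨u, hu⟩ : V)
  have hyu' : G.Adj y u' := hcen ▸ (hadj ⟨x, hx⟩ ⟨u, hu⟩).1 hxu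
  have hdist : ∀ a : {v // G.dist x v ≤ n + 1}, G.dist u a ≤ n ↔ G.dist u' (F a) ≤ n := by
    intro a
    constructor
    · intro ha
      refine (dist_ballIso_le hG hadj ⟨u, hu⟩ a ?_).trans ha
      change G.dist x u + G.dist u a ≤ n + 1
      rw [dist_eq_one_iff_adj.2 hxu]
      omega
    · intro ha
      have := dist_ballIso_le hG (fun v w => (adj_symm_apply_iff hadj v w).symm) (F ⟨u, hu⟩)
        (F a) (by change G.dist y u' + G.dist u' (F a) ≤ n + 1
                  rw [dist_eq_one_iff_adj.2 hyu']; omega)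
      simp only [Equiv.symm_apply_apply] at this
      exact this.trans ha
  have hball {v} : G.dist u v ≤ n → G.dist x v ≤ n + 1 := hG.dist_le_succ_of_adj hxu
  refine ⟨u', hyu', (Equiv.subtypeSubtypeEquivSubtype hball).symm.trans
    ((F.subtypeEquiv hdist).trans
      (Equiv.subtypeSubtypeEquivSubtype (hG.dist_le_succ_of_adj hyu'))), rfl,
    fun a b => hadj ⟨a, hball a.2⟩ ⟨b, hball b.2⟩, fun a => hcol ⟨a, hball a.2⟩⟩

end BallEquiv

section IsSpecial

variable {V A : Type*} {G : SimpleGraph V} {φ : V → A} {l : ℕ}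

lemma IsSpecial.of_ballEquiv {x x' : V} (hx : IsSpecial G φ l x) (h : BallEquiv G φ l x x') :
    IsSpecial G φ l x' := by
  obtain ⟨y, z, hy, hz, hyz⟩ := hx
  exact ⟨y, z, h.symm.trans hy, h.symm.trans hz, hyz⟩

lemma BallEquiv.succ_of_not_isSpecial {x x' : V} (h : BallEquiv G φ l x x')
    (hx' : ¬IsSpecial G φ l x') : BallEquiv G φ (l + 1) x x' := by
  by_contra hne
  exact hx' ⟨x, x', h.symm, BallEquiv.refl x', hne⟩

theorem exists_isSpecial_dist_le_of_ballEquiv (hG : G.Connected) {z : V}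
    (hz : IsSpecial G φ l z) {w w' : V} (h : BallEquiv G φ l w w') :
    ∃ w'', G.dist w' w'' ≤ G.dist w z ∧ IsSpecial G φ l w'' := by
  induction hm : G.dist w z generalizing w w' with
  | zero =>
    rw [hG.dist_eq_zero_iff] at hm
    exact ⟨w', by simp, (hm ▸ hz).of_ballEquiv h⟩
  | succ m ih =>
    by_cases hw' : IsSpecial G φ l w'
    · exact ⟨w', by simp, hw'⟩
    obtain ⟨u, hwu, huz⟩ := hG.exists_adj_dist_eq_of_dist_eq_succ hm
    obtain ⟨u', hw'u', hu⟩ := (h.succ_of_not_isSpecial hw').exists_adj_of_succ hG hwu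
    obtain ⟨w'', hu'w'', hw''⟩ := ih hu huz
    exact ⟨w'', hG.dist_le_succ_of_adj hw'u' hu'w'', hw''⟩

end IsSpecial

section BallCode

variable {V A : Type*} {G : SimpleGraph V} {φ : V → A} {n s : ℕ}

/-- The colored ball around `x`, relabeled along an injection `f` into `Fin s`. -/
def ballCode (G : SimpleGraph V) (φ : V → A) {x : V} (f : {v // G.dist x v ≤ n} → Fin s) :
    Fin s × (Fin s → A → Prop) × (Fin s → Fin s → Prop) :=
  (f ⟨x, by simp⟩, fun j a => ∃ v, f v = j ∧ φ v = a,
    fun i j => ∃ v w, f v = i ∧ f w = j ∧ G.Adj v w)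

lemma ballEquiv_of_ballCode_eq {x y : V} {f : {v // G.dist x v ≤ n} → Fin s}
    {g : {v // G.dist y v ≤ n} → Fin s} (hf : f.Injective) (hg : g.Injective)
    (h : ballCode G φ f = ballCode G φ g) : BallEquiv G φ n x y := by
  simp only [ballCode, Prod.mk.injEq] at h
  obtain ⟨hcen, hcol, hadj⟩ := h
  have hrange : Set.range f = Set.range g := by
    ext j
    have hcolj : ∀ a, (∃ v, f v = j ∧ φ v = a) ↔ ∃ w, g w = j ∧ φ w = a := fun a =>
      Eq.to_iff (congrFun (congrFun hcol j) a)
    constructor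
    · rintro ⟨v, rfl⟩
      obtain ⟨w, hw, -⟩ := (hcolj (φ v)).1 ⟨v, rfl, rfl⟩
      exact ⟨w, hw⟩
    · rintro ⟨w, rfl⟩
      obtain ⟨v, hv, -⟩ := (hcolj (φ w)).2 ⟨w, rfl, rfl⟩
      exact ⟨v, hv⟩
  let e := (Equiv.ofInjective f hf).trans
    ((Equiv.setCongr hrange).trans (Equiv.ofInjective g hg).symm)
  have he : ∀ v, f v = g (e v) := fun v => by simp [e, Equiv.apply_ofInjective_symm]
  have hey : e ⟨x, by simp⟩ = ⟨y, by simp⟩ := hg (by rw [← he, hcen])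
  refine ⟨e, congrArg Subtype.val hey, fun u w => ?_, fun v => ?_⟩
  · simpa [he, hf.eq_iff, hg.eq_iff] using Eq.to_iff (congrFun (congrFun hadj (f u)) (f w))
  · simpa [he, hf.eq_iff, hg.eq_iff] using Eq.to_iff (congrFun (congrFun hcol (f v)) (φ v))

end BallCode

namespace SimpleGraph

variable {V A : Type*} {G : SimpleGraph V} {k : ℕ}

lemma Connected.exists_injective_ball_fin (hG : G.Connected)
    (hfin : ∀ v, (G.neighborSet v).Finite) (hdeg : ∀ v, (G.neighborSet v).ncard ≤ k)
    (n : ℕ) (x : V) : ∃ f : {v // G.dist x v ≤ n} → Fin ((k + 1) ^ n), f.Injective := by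
  obtain ⟨hball, hcard⟩ := hG.finite_and_ncard_setOf_dist_le hfin hdeg x n
  have : Finite {v // G.dist x v ≤ n} := hball.to_subtype
  have hcard' : Nat.card {v // G.dist x v ≤ n} ≤ (k + 1) ^ n :=
    (Nat.card_coe_set_eq _).trans_le hcard
  exact ⟨Fin.castLE hcard' ∘ Finite.equivFin _,
    (Fin.castLE_injective hcard').comp (Finite.equivFin _).injective⟩

theorem Connected.finite_quot_ballEquiv [Finite A] (hG : G.Connected)
    (hfin : ∀ v, (G.neighborSet v).Finite) (hdeg : ∀ v, (G.neighborSet v).ncard ≤ k)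
    (φ : V → A) (n : ℕ) : Finite (Quot (BallEquiv G φ n)) := by
  choose f hf using hG.exists_injective_ball_fin hfin hdeg n
  exact Quot.finite_of_eq_imp_rel (fun x => ballCode G φ (f x))
    fun x y h => ballEquiv_of_ballCode_eq (hf x) (hf y) h

end SimpleGraph

theorem stmt_7 {V A : Type*} (T : SimpleGraph V) (φ : V → A) (k : ℕ)
    (hk : 2 ≤ k) (htree : T.IsTree) (hreg : ∀ v : V, (T.neighborSet v).ncard = k)
    (l : ℕ) (hsp : ∃ x0 : V, IsSpecial T φ l x0) :
    (∀ x : V, ∃ M : ℕ, ∀ x' : V, BallEquiv T φ l x x' →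
      ∃ w : V, T.dist x' w ≤ M ∧ IsSpecial T φ l w) ∧
    (Finite A → ∃ N : ℕ, ∀ x : V, ∃ w : V, T.dist x w ≤ N ∧ IsSpecial T φ l w) := by
  obtain ⟨x₀, hx₀⟩ := hsp
  have hT : T.Connected := htree.connected
  refine ⟨fun x => ⟨T.dist x x₀, fun _ => exists_isSpecial_dist_le_of_ballEquiv hT hx₀⟩,
    fun _ => ?_⟩
  have hfin : ∀ v, (T.neighborSet v).Finite := fun v =>
    Set.finite_of_ncard_ne_zero (by rw [hreg v]; omega)
  have := hT.finite_quot_ballEquiv hfin (fun v => (hreg v).le) φ l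
  obtain ⟨N, hN⟩ :=
    (Set.finite_range fun c : Quot (BallEquiv T φ l) => T.dist c.out x₀).bddAbove
  refine ⟨N, fun x => ?_⟩
  have hx : BallEquiv T φ l (Quot.mk _ x).out x :=
    ballEquiv_equivalence.eqvGen_iff.1 (Quot.eqvGen_exact (Quot.out_eq _))
  obtain ⟨w, hw, hsw⟩ := exists_isSpecial_dist_le_of_ballEquiv hT hx₀ hx
  exact ⟨w, hw.trans (hN ⟨_, rfl⟩), hsw⟩
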